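/- Let T be a strongly continuous unitary representation of a locally compact σ-compact abelian group G on a Hilbert space H, and let f ∈ H. Then the orbit map t ↦ T^t f is (Bohr) almost periodic (equivalently, has relatively compact range) if and only if the diagonal matrix coefficient t ↦ ⟨f, T^t f⟩ is an almost periodic function G → ℂ. -/

import Mathlib

open scoped InnerProductSpace

/-- A subset `S` of a group `G` is relatively dense if `S * K = G` for some compact `K`. -/
def RelativelyDense {G : Type*} [Mul G] [TopologicalSpace G] (S : Set G) : Prop :=
  ∃ K : Set G, IsCompact K ∧ ∀ g : G, ∃ t ∈ S, ∃ k ∈ K, g = t * k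

/-- Bohr almost periodicity of a continuous function from a topological group to a
normed space: every `ε` admits a relatively dense set of `ε`-almost periods. -/
def BohrAlmostPeriodic {G : Type*} [Group G] [TopologicalSpace G] {X : Type*}
    [NormedAddCommGroup X] (p : G → X) : Prop :=
  Continuous p ∧ ∀ ε > (0 : ℝ),
    RelativelyDense {t : G | ∀ s : G, ‖p (t * s) - p s‖ < ε}

/-!
Since `G` is abelian and each `T t` is an isometry, `‖T (t * s) f - T s f‖ = ‖T t f - f‖`, so
both conditions say that the sets `{t | ‖T t f - f‖ < ε}` are relatively dense. For the orbit
this is the finite-net characterisation of precompactness. For the matrix coefficient,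
`‖T t f - f‖ ^ 2 = 2 Re (⟪f, f⟫ - ⟪f, T t f⟫)` and
`‖⟪f, T (t * s) f⟫ - ⟪f, T s f⟫‖ ≤ ‖f‖ ‖T t f - f‖` compare its almost periods with those of
the orbit.
-/

open Metric

theorem RelativelyDense.mono {G : Type*} [Mul G] [TopologicalSpace G] {S S' : Set G}
    (h : RelativelyDense S) (hSS' : S ⊆ S') : RelativelyDense S' := by
  obtain ⟨K, hK, hcov⟩ := h
  refine ⟨K, hK, fun g => ?_⟩
  obtain ⟨t, ht, k, hk, rfl⟩ := hcov g
  exact ⟨t, hSS' ht, k, hk, rfl⟩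

section Orbit

variable {G R E : Type*} [CommGroup G] [Semiring R] [SeminormedAddCommGroup E] [Module R E]
  (T : G →* (E ≃ₗᵢ[R] E))

theorem norm_map_mul_apply_sub (t s : G) (x : E) : ‖T (t * s) x - T s x‖ = ‖T t x - x‖ := by
  have hts : T (t * s) x = T s (T t x) := by rw [mul_comm, map_mul]; rfl
  rw [hts, ← map_sub, LinearIsometryEquiv.norm_map]

variable [TopologicalSpace G]

theorem relativelyDense_of_isCompact_closure_range {x : E}
    (hx : IsCompact (closure (Set.range fun t => T t x))) {ε : ℝ} (hε : 0 < ε) :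
    RelativelyDense {t : G | ‖T t x - x‖ < ε} := by
  obtain ⟨N, hN, hNfin, hcov⟩ :=
    finite_approx_of_totallyBounded (totallyBounded_closure.mp hx.totallyBounded) ε hε
  choose! c hc using fun y (hy : y ∈ N) => hN hy
  refine ⟨c '' N, (hNfin.image c).isCompact, fun g => ?_⟩
  obtain ⟨y, hy, hgy⟩ : ∃ y ∈ N, dist (T g x) y < ε := by simpa using hcov ⟨g, rfl⟩
  refine ⟨g * (c y)⁻¹, ?_, c y, Set.mem_image_of_mem c hy, by group⟩
  have hcy : T (c y) x = y := hc y hy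
  show ‖T (g * (c y)⁻¹) x - x‖ < ε
  rwa [← norm_map_mul_apply_sub T _ (c y), inv_mul_cancel_right, hcy, ← dist_eq_norm]

theorem totallyBounded_range_of_relativelyDense {x : E} (hx : Continuous fun t => T t x)
    (hap : ∀ ε > 0, RelativelyDense {t : G | ‖T t x - x‖ < ε}) :
    TotallyBounded (Set.range fun t => T t x) := by
  refine totallyBounded_iff.mpr fun ε hε => ?_
  obtain ⟨K, hK, hcov⟩ := hap (ε / 2) (half_pos hε)
  obtain ⟨N, hNfin, hNcov⟩ :=
    totallyBounded_iff.mp (hK.image hx).totallyBounded (ε / 2) (half_pos hε)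
  refine ⟨N, hNfin, ?_⟩
  rintro _ ⟨g, rfl⟩
  obtain ⟨t, ht, k, hk, rfl⟩ := hcov g
  obtain ⟨y, hy, hky⟩ : ∃ y ∈ N, dist (T k x) y < ε / 2 := by simpa using hNcov ⟨k, hk, rfl⟩
  refine Set.mem_biUnion hy (mem_ball.mpr ?_)
  calc dist (T (t * k) x) y ≤ dist (T (t * k) x) (T k x) + dist (T k x) y := dist_triangle _ _ _
    _ < ε / 2 + ε / 2 := by
        rw [dist_eq_norm, norm_map_mul_apply_sub]
        exact add_lt_add ht hky
    _ = ε := add_halves ε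

theorem isCompact_closure_range_iff [CompleteSpace E] {x : E} (hx : Continuous fun t => T t x) :
    IsCompact (closure (Set.range fun t => T t x)) ↔
      ∀ ε > 0, RelativelyDense {t : G | ‖T t x - x‖ < ε} :=
  ⟨fun h _ hε => relativelyDense_of_isCompact_closure_range T h hε, fun h =>
    (totallyBounded_range_of_relativelyDense T hx h).closure.isCompact_of_isClosed
      isClosed_closure⟩

end Orbit

section MatrixCoefficient

variable {𝕜 H : Type*} [RCLike 𝕜] [NormedAddCommGroup H] [InnerProductSpace 𝕜 H]

theorem LinearIsometry.norm_apply_sub_self_sq_le (U : H →ₗᵢ[𝕜] H) (x : H) :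
    ‖U x - x‖ ^ 2 ≤ 2 * ‖⟪x, U x⟫_𝕜 - ⟪x, x⟫_𝕜‖ := by
  have hsq : ‖U x - x‖ ^ 2 = 2 * RCLike.re (⟪x, x⟫_𝕜 - ⟪x, U x⟫_𝕜) := by
    rw [norm_sub_sq (𝕜 := 𝕜), map_sub, inner_self_eq_norm_sq (𝕜 := 𝕜), inner_re_symm, U.norm_map]
    ring
  rw [hsq, norm_sub_rev]
  exact mul_le_mul_of_nonneg_left (RCLike.re_le_norm _) zero_le_two

variable {G : Type*} [CommGroup G] (T : G →* (H ≃ₗᵢ[𝕜] H))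

theorem norm_inner_map_mul_sub_le (t s : G) (x : H) :
    ‖⟪x, T (t * s) x⟫_𝕜 - ⟪x, T s x⟫_𝕜‖ ≤ ‖x‖ * ‖T t x - x‖ := by
  rw [← inner_sub_right, ← norm_map_mul_apply_sub T t s]
  exact norm_inner_le_norm _ _

theorem bohrAlmostPeriodic_inner_iff [TopologicalSpace G] {x : H}
    (hx : Continuous fun t => T t x) :
    BohrAlmostPeriodic (fun t => ⟪x, T t x⟫_𝕜) ↔
      ∀ ε > 0, RelativelyDense {t : G | ‖T t x - x‖ < ε} := by
  constructor
  · rintro ⟨-, hap⟩ ε hε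
    refine (hap (ε ^ 2 / 2) (by positivity)).mono fun t ht => ?_
    have hcoeff : ‖⟪x, T t x⟫_𝕜 - ⟪x, x⟫_𝕜‖ < ε ^ 2 / 2 := by
      simpa using ht 1
    have hsq : ‖T t x - x‖ ^ 2 < ε ^ 2 := by
      have hU : ‖T t x - x‖ ^ 2 ≤ 2 * ‖⟪x, T t x⟫_𝕜 - ⟪x, x⟫_𝕜‖ :=
        (T t).toLinearIsometry.norm_apply_sub_self_sq_le x
      linarith
    exact lt_of_pow_lt_pow_left₀ 2 hε.le hsq
  · intro hap
    refine ⟨continuous_const.inner hx, fun ε hε => ?_⟩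
    have hx1 : 0 < ‖x‖ + 1 := by positivity
    refine (hap (ε / (‖x‖ + 1)) (div_pos hε hx1)).mono fun t ht s => ?_
    calc ‖⟪x, T (t * s) x⟫_𝕜 - ⟪x, T s x⟫_𝕜‖ ≤ ‖x‖ * ‖T t x - x‖ :=
          norm_inner_map_mul_sub_le T t s x
      _ ≤ (‖x‖ + 1) * ‖T t x - x‖ := by gcongr; linarith
      _ < (‖x‖ + 1) * (ε / (‖x‖ + 1)) := mul_lt_mul_of_pos_left ht hx1
      _ = ε := mul_div_cancel₀ ε hx1.ne'

end MatrixCoefficient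

theorem stmt0_general {G : Type*} [CommGroup G] [TopologicalSpace G]
    {H : Type*} [NormedAddCommGroup H] [InnerProductSpace ℂ H] [CompleteSpace H]
    (T : G →* (H ≃ₗᵢ[ℂ] H)) (hT : ∀ g : H, Continuous fun t : G => T t g)
    (f : H) :
    IsCompact (closure (Set.range fun t : G => T t f)) ↔
      BohrAlmostPeriodic fun t : G => (⟪f, T t f⟫_ℂ : ℂ) :=
  (isCompact_closure_range_iff T (hT f)).trans (bohrAlmostPeriodic_inner_iff T (hT f)).symm

/-- for a strongly continuous unitary representation `T` of a locally compact
σ-compact abelian group `G` on a Hilbert space `H` and `f ∈ H`, the orbit map `t ↦ T^t f`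
has relatively compact range (equivalently, is Bohr almost periodic) if and only if the
diagonal matrix coefficient `t ↦ ⟨f, T^t f⟩` is an almost periodic function `G → ℂ`. -/
theorem stmt0 {G : Type*} [CommGroup G] [TopologicalSpace G] [IsTopologicalGroup G]
    [LocallyCompactSpace G] [SigmaCompactSpace G]
    {H : Type*} [NormedAddCommGroup H] [InnerProductSpace ℂ H] [CompleteSpace H]
    (T : G →* (H ≃ₗᵢ[ℂ] H)) (hT : ∀ g : H, Continuous fun t : G => T t g)
    (f : H) :
    IsCompact (closure (Set.range fun t : G => T t f)) ↔
      BohrAlmostPeriodic fun t : G => (⟪f, T t f⟫_ℂ : ℂ) :=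
  stmt0_general T hT f
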